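/- In the coproduct monoid ⟨X⟩ * [Y], if vw = v'w' with |v| = |v'|, |w| = |w'|, and w is non-pure, then the commuting suffixes agree: s(w) = s(w'). -/

import Mathlib

/-- Words over `X ⊔ Y`. -/
abbrev FM (X Y : Type) := FreeMonoid (X ⊕ Y)

/-- Swapping two adjacent `Y`-letters. -/
def yRel (X Y : Type) : FM X Y → FM X Y → Prop := fun a b =>
  ∃ (u v : FM X Y) (y₁ y₂ : Y),
    a = u * FreeMonoid.of (Sum.inr y₁) * FreeMonoid.of (Sum.inr y₂) * v ∧
    b = u * FreeMonoid.of (Sum.inr y₂) * FreeMonoid.of (Sum.inr y₁) * v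

/-- The congruence generated by swaps of adjacent `Y`-letters. -/
def coCon (X Y : Type) : Con (FM X Y) := conGen (yRel X Y)

/-- The coproduct monoid `⟨X⟩ * [Y]`. -/
abbrev CoprodM (X Y : Type) := (coCon X Y).Quotient

/-- Length descends to the quotient. -/
def lenHom (X Y : Type) : CoprodM X Y →* Multiplicative ℕ :=
  Con.lift _ (FreeMonoid.lift fun _ => Multiplicative.ofAdd 1) (by
    refine Con.conGen_le.2 ?_
    rintro a b ⟨u, v, y₁, y₂, rfl, rfl⟩
    simp [Con.ker_rel, map_mul])

/-- Length of an element of the coproduct monoid. -/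
def len {X Y : Type} (w : CoprodM X Y) : ℕ := Multiplicative.toAdd (lenHom X Y w)

/-- A monoid recording the commuting prefix and suffix. -/
inductive PS (Y : Type) where
  | pure : Multiset Y → PS Y
  | mixed : Multiset Y → Multiset Y → PS Y

def PS.mul {Y : Type} : PS Y → PS Y → PS Y
  | .pure c, .pure d => .pure (c + d)
  | .pure c, .mixed p s => .mixed (c + p) s
  | .mixed p s, .pure d => .mixed p (s + d)
  | .mixed p _, .mixed _ s' => .mixed p s'

instance {Y : Type} : Monoid (PS Y) where
  mul := PS.mul
  one := .pure 0
  mul_assoc a b c := by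
    rcases a <;> rcases b <;> rcases c <;>
      simp [(· * ·), PS.mul, add_assoc]
  one_mul a := by rcases a <;> simp [(· * ·), PS.mul]
  mul_one a := by rcases a <;> simp [(· * ·), PS.mul]

/-- The prefix/suffix data descends to the quotient. -/
def psHom (X Y : Type) : CoprodM X Y →* PS Y :=
  Con.lift _ (FreeMonoid.lift fun a =>
      match a with
      | Sum.inl _ => PS.mixed 0 0
      | Sum.inr y => PS.pure {y}) (by
    refine Con.conGen_le.2 ?_
    rintro a b ⟨u, v, y₁, y₂, rfl, rfl⟩
    have key : (PS.pure {y₁} : PS Y) * PS.pure {y₂} = PS.pure {y₂} * PS.pure {y₁} := by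
      show PS.mul _ _ = PS.mul _ _
      simp [PS.mul, add_comm]
    simp only [Con.ker_rel, map_mul, FreeMonoid.lift_eval_of]
    rw [mul_assoc _ (PS.pure {y₁}), key, mul_assoc, ← mul_assoc, ← mul_assoc])

/-- The commuting prefix of an element, as a multiset of `Y`-variables. -/
def pre {X Y : Type} (w : CoprodM X Y) : Multiset Y :=
  match psHom X Y w with
  | .pure c => c
  | .mixed p _ => p

/-- The commuting suffix of an element, as a multiset of `Y`-variables. -/
def suf {X Y : Type} (w : CoprodM X Y) : Multiset Y :=
  match psHom X Y w with
  | .pure c => c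
  | .mixed _ s => s

/-- The canonical embedding of the free abelian monoid `[Y]` (words in `Y`). -/
def yEmb (X Y : Type) : FreeMonoid Y →* CoprodM X Y :=
  (Con.mk' (coCon X Y)).comp (FreeMonoid.map Sum.inr)

/-- An element is pure if it involves only `Y`-variables. -/
def IsPure {X Y : Type} (w : CoprodM X Y) : Prop := w ∈ MonoidHom.mrange (yEmb X Y)

/-- The pure element of the coproduct monoid corresponding to a multiset of
`Y`-variables. -/
noncomputable def pureElt {X Y : Type} (c : Multiset Y) : CoprodM X Y :=
  yEmb X Y (FreeMonoid.ofList c.toList)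

/-- The equivalence relation `∼`: equal lengths and either both pure, or equal
prefix lengths, equal middle parts and equal suffix lengths. -/
noncomputable def Sim {X Y : Type} (u v : CoprodM X Y) : Prop :=
  len u = len v ∧
  ((IsPure u ∧ IsPure v) ∨
    (¬ IsPure u ∧ ¬ IsPure v ∧
      Multiset.card (pre u) = Multiset.card (pre v) ∧
      Multiset.card (suf u) = Multiset.card (suf v) ∧
      ∃ m : CoprodM X Y,
        u = pureElt (pre u) * m * pureElt (suf u) ∧
        v = pureElt (pre v) * m * pureElt (suf v)))

/-! Appending a non-pure word `w` on the right of anything does not change the commuting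
suffix, so `s(vw) = s(w)`; moreover `|s(w)| < |w|` for non-pure `w`, while `|s(u)| = |u|` for pure
`u`. If `w'` were pure, `s(v'w') = s(v') + s(w')` would have at least `|w'| = |w|` letters, yet it
equals `s(vw) = s(w)`. Hence `w'` is non-pure too, and `s(w) = s(vw) = s(v'w') = s(w')`. -/

section

variable {X Y : Type}

theorem len_mul (a b : CoprodM X Y) : len (a * b) = len a + len b := by
  simp only [len, map_mul, toAdd_mul]

theorem len_mk_of (a : X ⊕ Y) : len (Con.mk' (coCon X Y) (FreeMonoid.of a)) = 1 := rfl

theorem len_yEmb (u : FreeMonoid Y) : len (yEmb X Y u) = u.length := by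
  induction u using FreeMonoid.inductionOn' with
  | one => rfl
  | of_mul y u ih => rw [map_mul, len_mul, ih, FreeMonoid.length_mul]; rfl

theorem psHom_yEmb (u : FreeMonoid Y) :
    psHom X Y (yEmb X Y u) = .pure (u.toList : Multiset Y) := by
  induction u using FreeMonoid.inductionOn' with
  | one => rfl
  | of_mul y u ih => rw [map_mul, map_mul, ih]; rfl

theorem closure_range_mk_of :
    Submonoid.closure (Set.range fun a : X ⊕ Y => Con.mk' (coCon X Y) (FreeMonoid.of a)) = ⊤ := by
  rw [← FreeMonoid.mrange_lift, MonoidHom.mrange_eq_top]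
  convert Con.mk'_surjective (c := coCon X Y)
  exact FreeMonoid.hom_eq fun _ => rfl

theorem CoprodM.induction_on_right {motive : CoprodM X Y → Prop} (w : CoprodM X Y)
    (one : motive 1)
    (mul_of : ∀ w a, motive w → motive (w * Con.mk' (coCon X Y) (FreeMonoid.of a))) :
    motive w :=
  Submonoid.induction_of_closure_eq_top_right closure_range_mk_of w one
    (by rintro w _ ⟨a, rfl⟩; exact mul_of w a)

theorem isPure_or_exists_psHom_eq_mixed (w : CoprodM X Y) :
    IsPure w ∨ ∃ p s, psHom X Y w = .mixed p s ∧ Multiset.card s < len w := by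
  induction w using CoprodM.induction_on_right with
  | one => exact .inl (one_mem _)
  | mul_of w a ih =>
    rw [map_mul, len_mul, len_mk_of]
    rcases a with x | y
    · right
      cases psHom X Y w <;> exact ⟨_, 0, rfl, by simp⟩
    · rcases ih with hw | ⟨p, s, hw, hs⟩
      · exact .inl (mul_mem hw ⟨FreeMonoid.of y, rfl⟩)
      · exact .inr ⟨p, s + {y}, by rw [hw]; rfl, by simpa using hs⟩

theorem exists_psHom_eq_pure {w : CoprodM X Y} (hw : IsPure w) :
    ∃ c, psHom X Y w = .pure c ∧ Multiset.card c = len w := by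
  obtain ⟨u, rfl⟩ := hw
  exact ⟨_, psHom_yEmb u, by rw [len_yEmb, Multiset.coe_card]; rfl⟩

theorem card_suf_of_isPure {w : CoprodM X Y} (hw : IsPure w) :
    Multiset.card (suf w) = len w := by
  obtain ⟨c, hc, hcard⟩ := exists_psHom_eq_pure hw
  rwa [suf, hc]

theorem card_suf_lt_len {w : CoprodM X Y} (hw : ¬IsPure w) :
    Multiset.card (suf w) < len w := by
  obtain ⟨p, s, hps, hs⟩ := (isPure_or_exists_psHom_eq_mixed w).resolve_left hw
  rwa [suf, hps]

theorem suf_mul_of_isPure (a : CoprodM X Y) {b : CoprodM X Y} (hb : IsPure b) :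
    suf (a * b) = suf a + suf b := by
  obtain ⟨c, hc, -⟩ := exists_psHom_eq_pure hb
  simp only [suf, map_mul, hc]
  cases psHom X Y a <;> rfl

theorem suf_mul_of_not_isPure (a : CoprodM X Y) {b : CoprodM X Y} (hb : ¬IsPure b) :
    suf (a * b) = suf b := by
  obtain ⟨p, s, hps, -⟩ := (isPure_or_exists_psHom_eq_mixed b).resolve_left hb
  simp only [suf, map_mul, hps]
  cases psHom X Y a <;> rfl

end

theorem coprodM_suf_eq_of_mul_eq_general {X Y : Type} (v w v' w' : CoprodM X Y)
    (h : v * w = v' * w') (hw : len w = len w')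
    (hnp : ¬ IsPure w) :
    suf w = suf w' := by
  have hnp' : ¬IsPure w' := by
    intro hpure
    have hcard := congrArg Multiset.card (suf_mul_of_isPure v' hpure)
    rw [← h, suf_mul_of_not_isPure v hnp, Multiset.card_add, card_suf_of_isPure hpure] at hcard
    have := card_suf_lt_len hnp
    omega
  calc suf w = suf (v * w) := (suf_mul_of_not_isPure v hnp).symm
    _ = suf (v' * w') := by rw [h]
    _ = suf w' := suf_mul_of_not_isPure v' hnp'

/-- Lemma 3.5(iii): if `vw = v'w'` with `|v| = |v'|`, `|w| = |w'|` and `w`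
non-pure, then `s(w) = s(w')`. -/
theorem coprodM_suf_eq_of_mul_eq {X Y : Type} (v w v' w' : CoprodM X Y)
    (h : v * w = v' * w') (hv : len v = len v') (hw : len w = len w')
    (hnp : ¬ IsPure w) :
    suf w = suf w' :=
  coprodM_suf_eq_of_mul_eq_general v w v' w' h hw hnp
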